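/- arXiv:1609.09836 — 6 statements merged into one kernel-verified Lean document; each statement's English description precedes it below -/
import Mathlib

section
/- If Φ = {φ_i}_{i=1}^n is a sequence of unit vectors in C^m with n ≥ m, then the coherence μ(Φ) = max_{i≠j} |⟨φ_i, φ_j⟩| satisfies μ(Φ) ≥ sqrt((n-m)/(m(n-1))). -/
/-! Write `A` for the matrix of coordinates of the vectors in an orthonormal basis. The Gram
matrix `AᴴA` and the frame operator `AAᴴ` have the same Frobenius norm, since
`tr ((AᴴA)²) = tr ((AAᴴ)²)`. The frame operator is `m × m` with trace `n`, so Cauchy–Schwarz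
bounds this norm below by `n² / m`; the Gram matrix has unit diagonal and off-diagonal entries
of modulus at most `μ`, which bounds it above by `n + n (n - 1) μ²`. -/

open scoped InnerProductSpace

open Finset Matrix

section Frobenius

variable {𝕜 ι κ : Type*} [RCLike 𝕜] [Fintype ι] [Fintype κ]

lemma trace_mul_conjTranspose_self_eq_sum_norm_sq (M : Matrix ι κ 𝕜) :
    (M * Mᴴ).trace = ((∑ i, ∑ j, ‖M i j‖ ^ 2 : ℝ) : 𝕜) := by
  simp [trace, mul_apply, RCLike.mul_conj]

lemma sum_norm_sq_conjTranspose_mul_self_eq (A : Matrix κ ι 𝕜) :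
    ∑ i, ∑ j, ‖(Aᴴ * A) i j‖ ^ 2 = ∑ k, ∑ l, ‖(A * Aᴴ) k l‖ ^ 2 := by
  apply RCLike.ofReal_injective (K := 𝕜)
  simp only [← trace_mul_conjTranspose_self_eq_sum_norm_sq, conjTranspose_mul,
    conjTranspose_conjTranspose, Matrix.mul_assoc]
  rw [trace_mul_comm]
  simp only [Matrix.mul_assoc]

lemma norm_trace_sq_le_card_mul_sum_norm_sq (M : Matrix κ κ 𝕜) :
    ‖M.trace‖ ^ 2 ≤ Fintype.card κ * ∑ k, ∑ l, ‖M k l‖ ^ 2 :=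
  calc ‖M.trace‖ ^ 2 ≤ (∑ k, ‖M k k‖) ^ 2 := by
        gcongr
        exact norm_sum_le _ _
    _ ≤ Fintype.card κ * ∑ k, ‖M k k‖ ^ 2 := sq_sum_le_card_mul_sum_sq
    _ ≤ Fintype.card κ * ∑ k, ∑ l, ‖M k l‖ ^ 2 := by
        gcongr with k
        exact single_le_sum (f := fun l ↦ ‖M k l‖ ^ 2) (fun _ _ ↦ by positivity) (mem_univ k)

end Frobenius

section UnitVectors

variable {𝕜 E ι : Type*} [RCLike 𝕜] [NormedAddCommGroup E] [InnerProductSpace 𝕜 E] [Fintype ι]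

lemma card_sq_le_finrank_mul_sum_norm_inner_sq [FiniteDimensional 𝕜 E] (v : ι → E)
    (hv : ∀ i, ‖v i‖ = 1) :
    (Fintype.card ι : ℝ) ^ 2 ≤ Module.finrank 𝕜 E * ∑ i, ∑ j, ‖⟪v i, v j⟫_𝕜‖ ^ 2 := by
  set A : Matrix (Fin (Module.finrank 𝕜 E)) ι 𝕜 :=
    of fun k i ↦ (stdOrthonormalBasis 𝕜 E).repr (v i) k
  have hgram : gram 𝕜 v = Aᴴ * A := gram_eq_conjTranspose_mul _ v
  have htrace : (A * Aᴴ).trace = Fintype.card ι := by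
    rw [trace_mul_comm, ← hgram]
    simp [trace, inner_self_eq_norm_sq_to_K, hv]
  calc (Fintype.card ι : ℝ) ^ 2 = ‖(A * Aᴴ).trace‖ ^ 2 := by simp [htrace]
    _ ≤ Module.finrank 𝕜 E * ∑ k, ∑ l, ‖(A * Aᴴ) k l‖ ^ 2 := by
        simpa using norm_trace_sq_le_card_mul_sum_norm_sq (A * Aᴴ)
    _ = Module.finrank 𝕜 E * ∑ i, ∑ j, ‖⟪v i, v j⟫_𝕜‖ ^ 2 := by
        rw [← sum_norm_sq_conjTranspose_mul_self_eq, ← hgram]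
        rfl

lemma sum_norm_inner_sq_le [DecidableEq ι] (v : ι → E) (hv : ∀ i, ‖v i‖ = 1) {μ : ℝ}
    (hμ : ∀ i j, i ≠ j → ‖⟪v i, v j⟫_𝕜‖ ≤ μ) :
    ∑ i, ∑ j, ‖⟪v i, v j⟫_𝕜‖ ^ 2 ≤ Fintype.card ι * (1 + (Fintype.card ι - 1) * μ ^ 2) := by
  have hrow : ∀ i, ∑ j, ‖⟪v i, v j⟫_𝕜‖ ^ 2 ≤ 1 + (Fintype.card ι - 1) * μ ^ 2 := fun i ↦
    calc ∑ j, ‖⟪v i, v j⟫_𝕜‖ ^ 2 = 1 + ∑ j ∈ {i}ᶜ, ‖⟪v i, v j⟫_𝕜‖ ^ 2 := by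
          rw [Fintype.sum_eq_add_sum_compl i]
          simp [inner_self_eq_norm_sq_to_K, hv]
      _ ≤ 1 + ∑ j ∈ ({i}ᶜ : Finset ι), μ ^ 2 := by
          gcongr with j hj
          exact hμ i j (by simpa [eq_comm] using hj)
      _ = 1 + (Fintype.card ι - 1) * μ ^ 2 := by
          rw [sum_const, card_compl, card_singleton, nsmul_eq_mul,
            Nat.cast_sub (Fintype.card_pos_iff.mpr ⟨i⟩)]
          simp
  calc ∑ i, ∑ j, ‖⟪v i, v j⟫_𝕜‖ ^ 2 ≤ ∑ _i : ι, (1 + (Fintype.card ι - 1) * μ ^ 2) :=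
        sum_le_sum fun i _ ↦ hrow i
    _ = _ := by rw [sum_const, card_univ, nsmul_eq_mul]

lemma card_sub_finrank_le_mul_sq [FiniteDimensional 𝕜 E] [Nonempty ι] (v : ι → E)
    (hv : ∀ i, ‖v i‖ = 1) {μ : ℝ} (hμ : ∀ i j, i ≠ j → ‖⟪v i, v j⟫_𝕜‖ ≤ μ) :
    (Fintype.card ι : ℝ) - Module.finrank 𝕜 E ≤
      Module.finrank 𝕜 E * (Fintype.card ι - 1) * μ ^ 2 := by
  classical
  set N : ℝ := (Fintype.card ι : ℝ)
  set d : ℝ := (Module.finrank 𝕜 E : ℝ)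
  have hN : 0 < N := by simp [N, Fintype.card_pos]
  have hframe : N * N ≤ N * (d * (1 + (N - 1) * μ ^ 2)) :=
    calc N * N = N ^ 2 := (sq N).symm
      _ ≤ d * ∑ i, ∑ j, ‖⟪v i, v j⟫_𝕜‖ ^ 2 := card_sq_le_finrank_mul_sum_norm_inner_sq v hv
      _ ≤ d * (N * (1 + (N - 1) * μ ^ 2)) := by
          gcongr
          exact sum_norm_inner_sq_le v hv hμ
      _ = N * (d * (1 + (N - 1) * μ ^ 2)) := by ring
  linarith [le_of_mul_le_mul_left hframe hN]

end UnitVectors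

theorem welch_bound_general (m n : ℕ)
    (Φ : Fin n → EuclideanSpace ℂ (Fin m))
    (hunit : ∀ i, ‖Φ i‖ = 1) (μ : ℝ)
    (hμ : IsGreatest {r : ℝ | ∃ i j : Fin n, i ≠ j ∧ r = ‖⟪Φ i, Φ j⟫_ℂ‖} μ) :
    Real.sqrt (((n : ℝ) - m) / (m * ((n : ℝ) - 1))) ≤ μ := by
  obtain ⟨⟨i₀, j₀, -, hμ₀⟩, hmax⟩ := hμ
  have : Nonempty (Fin n) := ⟨i₀⟩
  have hn : (1 : ℝ) ≤ n := Nat.one_le_cast.mpr i₀.pos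
  have hwelch := card_sub_finrank_le_mul_sq Φ hunit fun i j hij ↦ hmax ⟨i, j, hij, rfl⟩
  rw [Fintype.card_fin, finrank_euclideanSpace_fin] at hwelch
  rw [Real.sqrt_le_left (hμ₀ ▸ norm_nonneg _)]
  exact div_le_of_le_mul₀ (by positivity) (sq_nonneg _) (by linarith)

/-- **Welch bound.** If `Φ` is a sequence of `n` unit vectors in `ℂ^m` with `n ≥ m`,
then the coherence `μ = max_{i ≠ j} |⟨Φ i, Φ j⟩|` satisfies
`μ ≥ √((n - m)/(m (n - 1)))`. -/
theorem welch_bound (m n : ℕ) (hmn : m ≤ n)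
    (Φ : Fin n → EuclideanSpace ℂ (Fin m))
    (hunit : ∀ i, ‖Φ i‖ = 1) (μ : ℝ)
    (hμ : IsGreatest {r : ℝ | ∃ i j : Fin n, i ≠ j ∧ r = ‖⟪Φ i, Φ j⟫_ℂ‖} μ) :
    Real.sqrt (((n : ℝ) - m) / (m * ((n : ℝ) - 1))) ≤ μ :=
  welch_bound_general m n Φ hunit μ hμ
end

section
/- Let Φ be an m×n complex matrix with unit-norm columns φ_1,...,φ_n achieving equality in the Welch bound μ(Φ) = sqrt((n-m)/(m(n-1))). Then ΦΦ* = (n/m)·I and |⟨φ_i, φ_j⟩| = sqrt((n-m)/(m(n-1))) for all i ≠ j. -/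
/-!
The frame operator `A Aᴴ` and the Gram matrix `Aᴴ A` have the same trace `n` and the same sum of
squared moduli of entries `S`. For the `m × m` frame operator, `S - n²/m` is the sum of squares of
`A Aᴴ - (n/m) I`, so `S ≥ n²/m` with equality only at `(n/m) I`. For the Gram matrix, unit diagonal
and off-diagonal moduli at most `μ` give `S ≤ n + n(n-1)μ²`, which is `n²/m` exactly at the Welch
value of `μ`. Hence both inequalities are equalities.
-/

open Matrix

namespace Matrix

variable {𝕜 ι κ : Type*} [RCLike 𝕜] [Fintype ι] [Fintype κ]

theorem trace_mul_conjTranspose_eq_sum_norm_sq (B : Matrix ι κ 𝕜) :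
    trace (B * Bᴴ) = ((∑ i, ∑ j, ‖B i j‖ ^ 2 : ℝ) : 𝕜) := by
  simp only [trace, diag, mul_apply, conjTranspose_apply, RCLike.star_def, RCLike.mul_conj]
  push_cast
  rfl

theorem sum_norm_sq_mul_conjTranspose_eq (A : Matrix ι κ 𝕜) :
    ∑ i, ∑ j, ‖(A * Aᴴ) i j‖ ^ 2 = ∑ i, ∑ j, ‖(Aᴴ * A) i j‖ ^ 2 := by
  have h : trace (A * Aᴴ * (A * Aᴴ)ᴴ) = trace (Aᴴ * A * (Aᴴ * A)ᴴ) := by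
    simp only [conjTranspose_mul, conjTranspose_conjTranspose, Matrix.mul_assoc]
    rw [trace_mul_comm]
    simp only [Matrix.mul_assoc]
  rwa [trace_mul_conjTranspose_eq_sum_norm_sq, trace_mul_conjTranspose_eq_sum_norm_sq,
    RCLike.ofReal_inj] at h

theorem sum_norm_sq_eq_zero_iff (B : Matrix ι κ 𝕜) : ∑ i, ∑ j, ‖B i j‖ ^ 2 = 0 ↔ B = 0 := by
  open scoped ComplexOrder in
  rw [← RCLike.ofReal_inj (K := 𝕜), ← trace_mul_conjTranspose_eq_sum_norm_sq, RCLike.ofReal_zero,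
    trace_mul_conjTranspose_self_eq_zero_iff]

variable [DecidableEq ι]

theorem sum_norm_sq_sub_smul_one (H : Matrix ι ι 𝕜) (c : ℝ) :
    ∑ i, ∑ j, ‖(H - (c : 𝕜) • 1) i j‖ ^ 2 =
      ∑ i, ∑ j, ‖H i j‖ ^ 2 - 2 * c * RCLike.re (trace H) + c ^ 2 * Fintype.card ι := by
  have hentry : ∀ i j, ‖(H - (c : 𝕜) • 1) i j‖ ^ 2 =
      ‖H i j‖ ^ 2 + if i = j then c ^ 2 - 2 * c * RCLike.re (H i i) else 0 := by
    intro i j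
    by_cases hij : i = j
    · subst hij
      simp only [algebraMap_smul, sub_apply, smul_apply, one_apply_eq, RCLike.norm_sq_eq_def,
        map_sub, RCLike.smul_re, RCLike.one_re, mul_one, RCLike.smul_im, RCLike.one_im, mul_zero,
        sub_zero, if_true]
      ring
    · simp [hij]
  simp only [hentry, Finset.sum_add_distrib, Finset.sum_ite_eq, Finset.mem_univ, if_true,
    Finset.sum_sub_distrib, trace, diag, map_sum, ← Finset.mul_sum]
  simp only [Finset.sum_const, Finset.card_univ, nsmul_eq_mul]
  ring

theorem sum_norm_sq_sub_mean_smul_one (H : Matrix ι ι 𝕜) :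
    ∑ i, ∑ j, ‖(H - ((RCLike.re (trace H) / Fintype.card ι : ℝ) : 𝕜) • 1) i j‖ ^ 2 =
      ∑ i, ∑ j, ‖H i j‖ ^ 2 - RCLike.re (trace H) ^ 2 / Fintype.card ι := by
  rw [sum_norm_sq_sub_smul_one]
  rcases isEmpty_or_nonempty ι with hι | hι
  · simp [trace]
  · field_simp
    ring

theorem sq_re_trace_div_card_le_sum_norm_sq (H : Matrix ι ι 𝕜) :
    RCLike.re (trace H) ^ 2 / Fintype.card ι ≤ ∑ i, ∑ j, ‖H i j‖ ^ 2 := by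
  rw [← sub_nonneg, ← sum_norm_sq_sub_mean_smul_one]
  positivity

theorem eq_smul_one_of_sum_norm_sq_le (H : Matrix ι ι 𝕜)
    (h : ∑ i, ∑ j, ‖H i j‖ ^ 2 ≤ RCLike.re (trace H) ^ 2 / Fintype.card ι) :
    H = ((RCLike.re (trace H) / Fintype.card ι : ℝ) : 𝕜) • 1 := by
  rw [← sub_eq_zero, ← sum_norm_sq_eq_zero_iff, sum_norm_sq_sub_mean_smul_one]
  linarith [sq_re_trace_div_card_le_sum_norm_sq H]

end Matrix

theorem Fintype.sum_sum_eq_sum_add_sum_offDiag {ι M : Type*} [Fintype ι] [DecidableEq ι]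
    [AddCommMonoid M] (f : ι → ι → M) :
    ∑ i, ∑ j, f i j = ∑ i, f i i + ∑ p ∈ Finset.univ.offDiag, f p.1 p.2 := by
  rw [← Finset.sum_product' (f := f), ← Finset.diag_union_offDiag,
    Finset.sum_union (Finset.disjoint_diag_offDiag _), Finset.sum_diag]

theorem welch_constant_nonneg {m n : ℕ} (hm : 0 < m) (hmn : m ≤ n) :
    0 ≤ ((n : ℝ) - m) / (m * ((n : ℝ) - 1)) := by
  have : (1 : ℝ) ≤ m := by exact_mod_cast hm
  have : (m : ℝ) ≤ n := by exact_mod_cast hmn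
  apply div_nonneg <;> nlinarith

theorem welch_constant_identity {m n : ℕ} (hm : 0 < m) (hmn : m ≤ n) :
    (n : ℝ) + ((n * n - n : ℕ) : ℝ) * (((n : ℝ) - m) / (m * ((n : ℝ) - 1))) = (n : ℝ) ^ 2 / m := by
  rcases Nat.lt_or_ge n 2 with hn | hn
  -- at `n = 1` the constant is the junk value `0 / 0`, but its coefficient `n * n - n` vanishes
  · obtain rfl : n = 1 := by omega
    obtain rfl : m = 1 := by omega
    norm_num
  · have hn1 : (n : ℝ) - 1 ≠ 0 := by
      have : (2 : ℝ) ≤ n := by exact_mod_cast hn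
      linarith
    rw [Nat.cast_sub (Nat.le_mul_self n)]
    push_cast
    field_simp
    ring

/-- If an `m × n` complex matrix `A` with unit-norm columns achieves equality in the
Welch bound, then `A Aᴴ = (n/m) I` and all off-diagonal inner products of columns
have modulus `√((n-m)/(m(n-1)))`, i.e. `A` is an equiangular tight frame. -/
theorem welch_equality (m n : ℕ) (hm : 0 < m) (hmn : m ≤ n)
    (A : Matrix (Fin m) (Fin n) ℂ)
    (hunit : ∀ j, (Aᴴ * A) j j = 1) (μ : ℝ)
    (hμ : IsGreatest {r : ℝ | ∃ i j : Fin n, i ≠ j ∧ r = ‖(Aᴴ * A) i j‖} μ)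
    (heq : μ = Real.sqrt (((n : ℝ) - m) / (m * ((n : ℝ) - 1)))) :
    A * Aᴴ = ((n : ℂ) / m) • (1 : Matrix (Fin m) (Fin m) ℂ) ∧
      ∀ i j : Fin n, i ≠ j →
        ‖(Aᴴ * A) i j‖ = Real.sqrt (((n : ℝ) - m) / (m * ((n : ℝ) - 1))) := by
  set c := ((n : ℝ) - m) / (m * ((n : ℝ) - 1))
  have hoff : ∀ p ∈ Finset.univ.offDiag, ‖(Aᴴ * A) p.1 p.2‖ ^ 2 ≤ c := fun p hp =>
    (Real.le_sqrt (norm_nonneg _) (welch_constant_nonneg hm hmn)).1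
      (heq ▸ hμ.2 ⟨p.1, p.2, (Finset.mem_offDiag.1 hp).2.2, rfl⟩)
  have htrace : RCLike.re (trace (A * Aᴴ)) = n := by
    rw [trace_mul_comm]
    simp [trace, hunit]
  have hgram : ∑ i, ∑ j, ‖(Aᴴ * A) i j‖ ^ 2 =
      n + ∑ p ∈ Finset.univ.offDiag, ‖(Aᴴ * A) p.1 p.2‖ ^ 2 := by
    rw [Fintype.sum_sum_eq_sum_add_sum_offDiag]
    simp [hunit]
  have hframe : (n : ℝ) ^ 2 / m ≤ ∑ i, ∑ j, ‖(Aᴴ * A) i j‖ ^ 2 := by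
    simpa [htrace, sum_norm_sq_mul_conjTranspose_eq] using
      sq_re_trace_div_card_le_sum_norm_sq (A * Aᴴ)
  have hoff_sum := Finset.sum_le_sum hoff
  have hcard : ∑ p ∈ (Finset.univ : Finset (Fin n)).offDiag, c = ((n * n - n : ℕ) : ℝ) * c := by
    simp [Finset.offDiag_card]
  have hwelch := welch_constant_identity hm hmn
  constructor
  · rw [eq_smul_one_of_sum_norm_sq_le (A * Aᴴ) (by
      rw [htrace, Fintype.card_fin, sum_norm_sq_mul_conjTranspose_eq]; linarith), htrace]
    simp
  · intro i j hij
    have hall := (Finset.sum_eq_sum_iff_of_le hoff).1 (by linarith)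
    rw [← hall (i, j) (by simp [hij]), Real.sqrt_sq (norm_nonneg _)]
end

section
/- Let G = U ×_B V be a B-product. For u ∈ U and v ∈ V, the conjugacy class of (u,v) in G equals {(u, v + B̂(u,w)) : w ∈ U}, where B̂(u,w) = B(u,w) - B(w,u). -/
/-- Multiplication of the B-product group `U ×_B V`. -/
def bmul {K U V : Type*} [Field K] [AddCommGroup U] [Module K U]
    [AddCommGroup V] [Module K V] (B : U →ₗ[K] U →ₗ[K] V)
    (p q : U × V) : U × V :=
  (p.1 + q.1, p.2 + q.2 + B p.1 q.1)

/-- Inversion of the B-product group `U ×_B V`. -/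
def binv {K U V : Type*} [Field K] [AddCommGroup U] [Module K U]
    [AddCommGroup V] [Module K V] (B : U →ₗ[K] U →ₗ[K] V)
    (p : U × V) : U × V :=
  (-p.1, -p.2 + B p.1 p.1)

/-- In `G = U ×_B V`, the conjugacy class of `(u,v)` equals
`{(u, v + B̂(u,w)) : w ∈ U}` where `B̂(u,w) = B(u,w) - B(w,u)`. -/
theorem bprod_conj_class (K U V : Type*) [Field K]
    [AddCommGroup U] [Module K U] [AddCommGroup V] [Module K V]
    (B : U →ₗ[K] U →ₗ[K] V) (u : U) (v : V) :
    {r : U × V | ∃ q : U × V, bmul B (bmul B (binv B q) (u, v)) q = r} =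
      {r : U × V | ∃ w : U, r = (u, v + (B u w - B w u))} := by
  ext r
  simp only [Set.mem_setOf_eq, bmul, binv]
  constructor
  · rintro ⟨⟨x, y⟩, rfl⟩
    refine ⟨x, ?_⟩
    simp only [Prod.mk.injEq]
    constructor
    · abel
    · simp only [map_add, map_neg, map_sub, LinearMap.add_apply, LinearMap.neg_apply]
      abel
  · rintro ⟨w, rfl⟩
    refine ⟨(w, 0), ?_⟩
    simp only [Prod.mk.injEq]
    constructor
    · abel
    · simp only [map_add, map_neg, map_sub, LinearMap.add_apply, LinearMap.neg_apply]
      abel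
end

section
/- Let n be odd and B : F_{2^n} × F_{2^n} → F_{2^n} the F_2-bilinear map B(α,β) = αβ². For each α ≠ 0, the range of the linear map L_α(β) = αβ² - α²β equals {x ∈ F_{2^n} : Tr(α⁻³ x) = 0}, which is a hyperplane (an F_2-subspace of codimension 1) in F_{2^n}. -/
/-!
Writing `γ = β / α`, one has `α⁻³ L_α(β) = γ² + γ`, and `Tr(γ² + γ) = γ^{2ⁿ} + γ = 0` by
telescoping; so the range of `L_α` lies in the trace-zero set of `α⁻³ x`. The kernel of the
additive map `L_α(β) = αβ(β - α)` is `{0, α}`, so its range has `2^{n-1}` elements, while the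
trace-zero set has at most `2^{n-1}` elements, being the roots of `∑_{j<n} X^{2^j}`.
-/

/-- The field trace of `F = 𝔽_{2^n}` over `𝔽₂`, viewed inside `F`:
`Tr(α) = α + α² + α⁴ + ⋯ + α^{2^{n-1}}`. -/
def fieldTr (n : ℕ) {F : Type*} [Field F] (α : F) : F :=
  ∑ j ∈ Finset.range n, α ^ (2 ^ j)

open Polynomial Finset

noncomputable def tracePoly (F : Type*) [Field F] (n : ℕ) : F[X] :=
  ∑ j ∈ range n, X ^ 2 ^ j

section TraceZero

variable {F : Type*} [Field F]

theorem eval_tracePoly (n : ℕ) (x : F) : (tracePoly F n).eval x = fieldTr n x := by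
  simp [tracePoly, fieldTr, eval_finsetSum]

theorem natDegree_tracePoly_succ (m : ℕ) : (tracePoly F (m + 1)).natDegree = 2 ^ m := by
  have hlow : (∑ j ∈ range m, (X : F[X]) ^ 2 ^ j).natDegree < 2 ^ m := by
    refine lt_of_le_of_lt (natDegree_sum_le_of_forall_le _ _ (n := 2 ^ m - 1) fun j hj => ?_)
      (Nat.sub_lt (by positivity) one_pos)
    rw [natDegree_X_pow]
    have := Nat.pow_lt_pow_right one_lt_two (mem_range.mp hj)
    omega
  rw [tracePoly, sum_range_succ, natDegree_add_eq_right_of_natDegree_lt, natDegree_X_pow]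
  rwa [natDegree_X_pow]

theorem ncard_setOf_fieldTr_eq_zero_le {n : ℕ} (hn : 0 < n) :
    {x : F | fieldTr n x = 0}.ncard ≤ 2 ^ (n - 1) := by
  obtain ⟨m, rfl⟩ := Nat.exists_eq_add_of_lt hn
  have hdeg := natDegree_tracePoly_succ (F := F) m
  have hne : tracePoly F (m + 1) ≠ 0 :=
    ne_zero_of_natDegree_gt (n := 0) (hdeg ▸ by positivity)
  have hroots : {x : F | fieldTr (m + 1) x = 0} = (tracePoly F (m + 1)).rootSet F := by
    ext x
    simp [mem_rootSet_of_ne hne, eval_tracePoly]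
  simpa [hroots, hdeg] using ncard_rootSet_le (tracePoly F (m + 1)) F

theorem ncard_setOf_fieldTr_mul_eq_zero (n : ℕ) {c : F} (hc : c ≠ 0) :
    {x : F | fieldTr n (c * x) = 0}.ncard = {x : F | fieldTr n x = 0}.ncard :=
  Set.ncard_preimage_of_injective_subset_range (s := {x : F | fieldTr n x = 0})
    (mul_right_injective₀ hc) fun y _ => ⟨c⁻¹ * y, mul_inv_cancel_left₀ hc y⟩

end TraceZero

section CharTwo

variable {F : Type*} [Field F] [CharP F 2]

theorem fieldTr_sq_add_self (n : ℕ) (γ : F) : fieldTr n (γ ^ 2 + γ) = γ ^ 2 ^ n + γ := by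
  induction n with
  | zero => simp [fieldTr, CharTwo.add_self_eq_zero]
  | succ m ih =>
    rw [fieldTr, sum_range_succ, ← fieldTr, ih, add_pow_char_pow, ← pow_mul, ← pow_succ']
    linear_combination γ ^ 2 ^ m * CharTwo.two_eq_zero (R := F)

/-- The paper's `L_α`: `β ↦ B(α, β) - B(β, α)` for `B(α, β) = αβ²`. -/
def skewB (α : F) : F →+ F where
  toFun β := α * β ^ 2 - α ^ 2 * β
  map_zero' := by ring
  map_add' a b := by rw [CharTwo.add_sq]; ring

theorem coe_range_skewB (α : F) :
    ((skewB α).range : Set F) = Set.range fun β => α * β ^ 2 - α ^ 2 * β :=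
  AddMonoidHom.coe_range _

theorem coe_ker_skewB {α : F} (hα : α ≠ 0) : ((skewB α).ker : Set F) = {0, α} := by
  ext β
  have hfac : α * β ^ 2 - α ^ 2 * β = α * β * (β - α) := by ring
  simp [skewB, hfac, hα, sub_eq_zero]

theorem two_mul_card_range_skewB [Finite F] {α : F} (hα : α ≠ 0) :
    2 * Nat.card (skewB α).range = Nat.card F := by
  have hker : Nat.card (skewB α).ker = 2 := by
    rw [← SetLike.coe_sort_coe, coe_ker_skewB hα, Nat.card_coe_set_eq,
      Set.ncard_pair hα.symm]
  rw [← hker, ← AddSubgroup.index_ker, AddSubgroup.card_mul_index]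

theorem inv_cube_mul_skewB {α : F} (hα : α ≠ 0) (β : F) :
    (α ^ 3)⁻¹ * skewB α β = (β / α) ^ 2 + β / α := by
  rw [← CharTwo.sub_eq_add]
  simp only [skewB, AddMonoidHom.coe_mk, ZeroHom.coe_mk]
  field_simp

theorem fieldTr_inv_cube_mul_skewB {n : ℕ} (hfrob : ∀ x : F, x ^ 2 ^ n = x) {α : F}
    (hα : α ≠ 0) (β : F) : fieldTr n ((α ^ 3)⁻¹ * skewB α β) = 0 := by
  rw [inv_cube_mul_skewB hα, fieldTr_sq_add_self, hfrob, CharTwo.add_self_eq_zero]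

end CharTwo

theorem range_L_hyperplane_general (F : Type*) [Field F] [Fintype F] (n : ℕ)
    (hcard : Fintype.card F = 2 ^ n)
    (α : F) (hα : α ≠ 0) :
    Set.range (fun β : F => α * β ^ 2 - α ^ 2 * β) =
        {x : F | fieldTr n ((α ^ 3)⁻¹ * x) = 0} ∧
      ∃ S : AddSubgroup F,
        (S : Set F) = Set.range (fun β : F => α * β ^ 2 - α ^ 2 * β) ∧
        Nat.card S = 2 ^ (n - 1) := by
  have hn : 0 < n :=
    Nat.pos_of_ne_zero (Nat.one_lt_two_pow_iff.mp (hcard ▸ Fintype.one_lt_card))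
  have : CharP F 2 := charP_of_card_eq_prime_pow hcard
  have hrange : Nat.card (skewB α).range = 2 ^ (n - 1) := by
    have h := two_mul_card_range_skewB hα
    rw [Nat.card_eq_fintype_card (α := F), hcard, ← Nat.succ_pred_eq_of_pos hn, pow_succ'] at h
    exact Nat.eq_of_mul_eq_mul_left two_pos h
  have hsub : ((skewB α).range : Set F) ⊆ {x | fieldTr n ((α ^ 3)⁻¹ * x) = 0} := by
    rintro _ ⟨β, rfl⟩
    exact fieldTr_inv_cube_mul_skewB (fun x => hcard ▸ FiniteField.pow_card x) hα β
  rw [← coe_range_skewB]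
  refine ⟨Set.eq_of_subset_of_ncard_le hsub ?_ (Set.toFinite _), _, rfl, hrange⟩
  calc {x | fieldTr n ((α ^ 3)⁻¹ * x) = 0}.ncard
      = {x : F | fieldTr n x = 0}.ncard :=
        ncard_setOf_fieldTr_mul_eq_zero n (inv_ne_zero (pow_ne_zero 3 hα))
    _ ≤ 2 ^ (n - 1) := ncard_setOf_fieldTr_eq_zero_le hn
    _ = ((skewB α).range : Set F).ncard := by rw [← hrange, ← Nat.card_coe_set_eq]; rfl

/-- Let `n` be odd, `F = 𝔽_{2^n}` and `B(α,β) = αβ²`. For `α ≠ 0`, the range of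
`L_α(β) = αβ² - α²β` equals `{x : Tr(α⁻³ x) = 0}`, which is a hyperplane: an
`𝔽₂`-subspace (additive subgroup, since `char F = 2`) of cardinality `2^{n-1}`,
i.e. of codimension 1. -/
theorem range_L_hyperplane (F : Type*) [Field F] [Fintype F] (n : ℕ)
    (hodd : Odd n) (hcard : Fintype.card F = 2 ^ n)
    (α : F) (hα : α ≠ 0) :
    Set.range (fun β : F => α * β ^ 2 - α ^ 2 * β) =
        {x : F | fieldTr n ((α ^ 3)⁻¹ * x) = 0} ∧
      ∃ S : AddSubgroup F,
        (S : Set F) = Set.range (fun β : F => α * β ^ 2 - α ^ 2 * β) ∧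
        Nat.card S = 2 ^ (n - 1) :=
  range_L_hyperplane_general F n hcard α hα
end

section
/- Let n = 2k+1 ≥ 3 be odd and B(α,β) = αβ² on F_{2^n}. Then B has the injective hyperplane property: for each α ≠ 0 the range of L_α(β) = αβ² - α²β is a hyperplane in F_{2^n}, and the assignment α ↦ ran(L_α) is injective on nonzero elements. -/
/-!
In characteristic 2 the map `L_α` is additive with kernel `{0, α}`, and
`L_α(x) = α³ L_1(x / α)`, so `ran L_α = α³ T` for the index-two subgroup `T = ran L_1`.
If `α³ T = β³ T`, then `c = α³ / β³` satisfies `c T ⊆ T`. The multipliers of `T` form a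
subfield `K` over which `F ⧸ T` is a vector space; as `F ⧸ T` has two elements, `K = 𝔽₂`
and `c = 1`. Finally cubing is injective on `Fˣ` because `3 ∤ 2ⁿ - 1` for odd `n`.
-/

section

variable {F : Type*} [Field F]

section skewMap

variable [CharP F 2]

-- `L_α(β) = B(α,β) - B(β,α)` for the form `B(α,β) = αβ²`.
def skewMap (α : F) : F →+ F :=
  AddMonoidHom.mk' (fun x => α * x ^ 2 - α ^ 2 * x) fun x y => by
    linear_combination α * x * y * CharTwo.two_eq_zero (R := F)

theorem skewMap_apply (α x : F) : skewMap α x = α * x ^ 2 - α ^ 2 * x := rfl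

theorem coe_ker_skewMap {α : F} (hα : α ≠ 0) : ((skewMap α).ker : Set F) = {0, α} := by
  ext x
  simp only [SetLike.mem_coe, AddMonoidHom.mem_ker, skewMap_apply, Set.mem_insert_iff,
    Set.mem_singleton_iff]
  constructor
  · intro hx
    have hfac : α * (x * (x - α)) = 0 := by linear_combination hx
    simpa [hα, sub_eq_zero] using hfac
  · rintro (rfl | rfl) <;> ring

theorem index_range_skewMap [Finite F] {α : F} (hα : α ≠ 0) : (skewMap α).range.index = 2 := by
  rw [AddSubgroup.index_range, ← SetLike.coe_sort_coe, coe_ker_skewMap hα, Nat.card_coe_set_eq,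
    Set.ncard_pair hα.symm]

theorem range_skewMap (α : F) :
    Set.range (skewMap α) = (α ^ 3 * ·) '' Set.range (skewMap 1) := by
  rcases eq_or_ne α 0 with rfl | hα
  · ext; simp [skewMap_apply]
  ext y
  constructor
  · rintro ⟨x, rfl⟩
    exact ⟨skewMap 1 (x / α), ⟨x / α, rfl⟩, by simp only [skewMap_apply]; field_simp⟩
  · rintro ⟨_, ⟨x, rfl⟩, rfl⟩
    exact ⟨α * x, by simp only [skewMap_apply]; ring⟩

end skewMap

def AddSubgroup.multiplierSubring {R : Type*} [Ring R] (T : AddSubgroup R) : Subring R where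
  carrier := {a | ∀ t ∈ T, a * t ∈ T}
  mul_mem' {a b} ha hb t ht := mul_assoc a b t ▸ ha _ (hb t ht)
  one_mem' t ht := (one_mul t).symm ▸ ht
  add_mem' {a b} ha hb t ht := (add_mul a b t).symm ▸ T.add_mem (ha t ht) (hb t ht)
  zero_mem' t _ := (zero_mul t).symm ▸ T.zero_mem
  neg_mem' {a} ha t ht := (neg_mul a t).symm ▸ T.neg_mem (ha t ht)

theorem FiniteField.inv_eq_pow_card_sub_two [Fintype F] {a : F} (ha : a ≠ 0) :
    a⁻¹ = a ^ (Fintype.card F - 2) := by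
  refine inv_eq_of_mul_eq_one_right ?_
  rw [← pow_succ', ← FiniteField.pow_card_sub_one_eq_one a ha]
  congr 1
  have := Fintype.one_lt_card (α := F)
  omega

def AddSubgroup.multiplierSubfield [Fintype F] (T : AddSubgroup F) : Subfield F :=
  T.multiplierSubring.toSubfield fun a ha => by
    rcases eq_or_ne a 0 with rfl | ha0
    · simp [T.multiplierSubring.zero_mem]
    · simpa [FiniteField.inv_eq_pow_card_sub_two ha0] using T.multiplierSubring.pow_mem ha _

theorem AddSubgroup.mem_multiplierSubfield [Fintype F] {T : AddSubgroup F} {a : F} :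
    a ∈ T.multiplierSubfield ↔ ∀ t ∈ T, a * t ∈ T :=
  Iff.rfl

theorem AddSubgroup.eq_one_of_mul_mem_of_index_eq_two [Fintype F] {T : AddSubgroup F}
    (hT : T.index = 2) {c : F} (hc : c ≠ 0) (hcT : ∀ t ∈ T, c * t ∈ T) : c = 1 := by
  let K := T.multiplierSubfield
  let V : Submodule K F := { T with smul_mem' := fun k _ ht => k.2 _ ht }
  have hK : Nat.card K = 2 := by
    have hquot : Nat.card (F ⧸ V) = Nat.card K ^ Module.finrank K (F ⧸ V) :=
      Module.natCard_eq_pow_finrank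
    have htwo : Nat.card (F ⧸ V) = 2 := hT
    have hdvd : Nat.card K ∣ 2 := by
      rw [htwo] at hquot
      rw [hquot]
      refine dvd_pow_self _ fun h0 => ?_
      simp [h0] at hquot
    exact le_antisymm (Nat.le_of_dvd two_pos hdvd) Finite.one_lt_card
  have hc2 : c ^ 2 = c := by
    let := Fintype.ofFinite K
    have := FiniteField.pow_card (⟨c, mem_multiplierSubfield.mpr hcT⟩ : K)
    rw [Fintype.card_eq_nat_card, hK] at this
    exact congrArg Subtype.val this
  have hfac : c * (c - 1) = 0 := by linear_combination hc2
  simpa [hc, sub_eq_zero] using hfac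

theorem FiniteField.pow_inj_of_coprime [Fintype F] {m : ℕ} (hm : (Fintype.card F - 1).Coprime m)
    {a b : F} (ha : a ≠ 0) (hb : b ≠ 0) (h : a ^ m = b ^ m) : a = b := by
  rw [Fintype.card_eq_nat_card, ← Nat.card_units] at hm
  have := (powCoprime hm).injective (a₁ := Units.mk0 a ha) (a₂ := Units.mk0 b hb)
    (Units.ext (by simpa using h))
  simpa using congrArg Units.val this

theorem eq_of_range_skewMap_eq [Fintype F] [CharP F 2] (hcop : (Fintype.card F - 1).Coprime 3)
    {α β : F} (hα : α ≠ 0) (hβ : β ≠ 0) (h : Set.range (skewMap α) = Set.range (skewMap β)) :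
    α = β := by
  have hβ3 : β ^ 3 ≠ 0 := pow_ne_zero 3 hβ
  have hc : α ^ 3 / β ^ 3 = 1 := by
    refine (skewMap (1 : F)).range.eq_one_of_mul_mem_of_index_eq_two
      (index_range_skewMap one_ne_zero) (div_ne_zero (pow_ne_zero 3 hα) hβ3) fun t ht => ?_
    have hmem : β ^ 3 * (α ^ 3 / β ^ 3 * t) ∈ Set.range (skewMap β) := by
      rw [← h, range_skewMap]
      exact ⟨t, ht, by field_simp⟩
    rw [range_skewMap] at hmem
    obtain ⟨s, hs, hst⟩ := hmem
    rwa [← mul_left_cancel₀ hβ3 hst]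
  exact FiniteField.pow_inj_of_coprime hcop hα hβ ((div_eq_one_iff_eq hβ3).mp hc)

theorem Nat.coprime_two_pow_odd_sub_one_three (k : ℕ) : (2 ^ (2 * k + 1) - 1).Coprime 3 := by
  have hmod : 2 ^ (2 * k + 1) % 3 = 2 := by
    rw [pow_succ, pow_mul, Nat.mul_mod, Nat.pow_mod]
    norm_num
  rw [Nat.coprime_comm, Nat.Prime.coprime_iff_not_dvd Nat.prime_three]
  generalize 2 ^ (2 * k + 1) = x at hmod ⊢
  omega

end

theorem suzuki_IHP_general (F : Type*) [Field F] [Fintype F] (n k : ℕ)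
    (hn : n = 2 * k + 1) (hcard : Fintype.card F = 2 ^ n) :
    (∀ α : F, α ≠ 0 →
      ∃ S : AddSubgroup F,
        (S : Set F) = Set.range (fun β : F => α * β ^ 2 - α ^ 2 * β) ∧
        Nat.card S = 2 ^ (n - 1)) ∧
    (∀ α β : F, α ≠ 0 → β ≠ 0 →
      Set.range (fun x : F => α * x ^ 2 - α ^ 2 * x) =
        Set.range (fun x : F => β * x ^ 2 - β ^ 2 * x) → α = β) := by
  have : CharP F 2 := charP_of_card_eq_prime_pow hcard
  refine ⟨fun α hα => ⟨(skewMap α).range, AddMonoidHom.coe_range _, ?_⟩,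
    fun α β hα hβ h => ?_⟩
  · have hS := (skewMap α).range.card_mul_index
    rw [index_range_skewMap hα, Nat.card_eq_fintype_card (α := F), hcard, hn, pow_succ] at hS
    rw [hn, Nat.add_sub_cancel]
    exact Nat.eq_of_mul_eq_mul_right two_pos hS
  · exact eq_of_range_skewMap_eq (hcard ▸ hn ▸ Nat.coprime_two_pow_odd_sub_one_three k) hα hβ h

/-- **Injective hyperplane property** for `B(α,β) = αβ²` on `F = 𝔽_{2^n}`,
`n = 2k+1 ≥ 3` odd: for each `α ≠ 0` the range of `L_α(β) = αβ² - α²β` is a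
hyperplane (an `𝔽₂`-subspace — equivalently, since `char F = 2`, an additive
subgroup — of cardinality `2^{n-1}`, i.e. codimension 1), and `α ↦ ran L_α` is
injective on nonzero elements. -/
theorem suzuki_IHP (F : Type*) [Field F] [Fintype F] (n k : ℕ)
    (hn : n = 2 * k + 1) (h3 : 3 ≤ n) (hcard : Fintype.card F = 2 ^ n) :
    (∀ α : F, α ≠ 0 →
      ∃ S : AddSubgroup F,
        (S : Set F) = Set.range (fun β : F => α * β ^ 2 - α ^ 2 * β) ∧
        Nat.card S = 2 ^ (n - 1)) ∧
    (∀ α β : F, α ≠ 0 → β ≠ 0 →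
      Set.range (fun x : F => α * x ^ 2 - α ^ 2 * x) =
        Set.range (fun x : F => β * x ^ 2 - β ^ 2 * x) → α = β) :=
  suzuki_IHP_general F n k hn hcard
end

section
/- Define ⟨α,β⟩ = Tr(αβ² + α²β) on F_{2^n} with n odd, and θ(α) = Σ_{j even, 0≤j≤n-1} α^{2^j}. Then for all x, y in the trace-zero subspace X₁, ⟨θ(x), θ(y)⟩ = Tr(xy). -/
/-- `θ(α) = ∑_{j even, 0 ≤ j ≤ n-1} α^{2^j}` for `n = 2k+1` odd. -/
def thetaMap (k : ℕ) {F : Type*} [Field F] (α : F) : F :=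
  ∑ i ∈ Finset.range (k + 1), α ^ (2 ^ (2 * i))

lemma sum_even_odd {M : Type*} [AddCommMonoid M] (f : ℕ → M) (m : ℕ) :
    ∑ j ∈ Finset.range (2 * m), f j =
      ∑ i ∈ Finset.range m, f (2 * i) + ∑ i ∈ Finset.range m, f (2 * i + 1) := by
  induction m with
  | zero => simp
  | succ m ih =>
    have h : 2 * (m + 1) = (2 * m + 1) + 1 := by ring
    rw [h, Finset.sum_range_succ, Finset.sum_range_succ, ih,
      Finset.sum_range_succ (fun i => f (2 * i)), Finset.sum_range_succ (fun i => f (2 * i + 1))]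
    abel

section helpers
variable {F : Type*} [Field F] [CharP F 2]

lemma tr_add (n : ℕ) (a b : F) : fieldTr n (a + b) = fieldTr n a + fieldTr n b := by
  simp only [fieldTr, add_pow_char_pow, Finset.sum_add_distrib]

lemma tr_sum (n : ℕ) {ι : Type*} (s : Finset ι) (f : ι → F) :
    fieldTr n (∑ i ∈ s, f i) = ∑ i ∈ s, fieldTr n (f i) := by
  unfold fieldTr
  rw [Finset.sum_comm]
  refine Finset.sum_congr rfl fun j _ => ?_
  exact map_sum (iterateFrobenius F 2 j) f s

variable [Fintype F] {n : ℕ} (hcard : Fintype.card F = 2 ^ n)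
include hcard

omit [CharP F 2] in
lemma pow_card_self (a : F) : a ^ (2 ^ n) = a := by
  rw [← hcard]; exact FiniteField.pow_card a

omit [CharP F 2] in
lemma tr_frob (a : F) : fieldTr n (a ^ 2) = fieldTr n a := by
  have h1 : ∀ j : ℕ, (a ^ 2) ^ (2 ^ j) = a ^ (2 ^ (j + 1)) := by
    intro j; rw [← pow_mul]; congr 1; ring
  have h2 : ∑ j ∈ Finset.range (n + 1), a ^ (2 ^ j)
      = ∑ j ∈ Finset.range n, a ^ (2 ^ (j + 1)) + a ^ (2 ^ 0) :=
    Finset.sum_range_succ' _ n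
  have h3 : ∑ j ∈ Finset.range (n + 1), a ^ (2 ^ j) = fieldTr n a + a := by
    rw [Finset.sum_range_succ, pow_card_self hcard]; rfl
  have := h2.symm.trans h3
  simp only [pow_zero, pow_one] at this
  unfold fieldTr
  simp only [h1]
  exact add_right_cancel this

omit [CharP F 2] in
lemma tr_frob_pow (a : F) (m : ℕ) : fieldTr n (a ^ (2 ^ m)) = fieldTr n a := by
  induction m with
  | zero => simp
  | succ m ih =>
    have : a ^ (2 ^ (m + 1)) = (a ^ (2 ^ m)) ^ 2 := by
      rw [pow_succ, pow_mul]
    rw [this, tr_frob hcard, ih]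

end helpers

/-- With `⟨α,β⟩ = Tr(αβ² + α²β)` on `F = 𝔽_{2^n}` (`n = 2k+1` odd), for all `x, y`
in the trace-zero subspace `X₁` we have `⟨θ(x), θ(y)⟩ = Tr(xy)`. -/
theorem form_theta (F : Type*) [Field F] [Fintype F] (n k : ℕ)
    (hn : n = 2 * k + 1) (hcard : Fintype.card F = 2 ^ n) :
    ∀ x y : F, fieldTr n x = 0 → fieldTr n y = 0 →
      fieldTr n (thetaMap k x * (thetaMap k y) ^ 2 +
          (thetaMap k x) ^ 2 * thetaMap k y) =
        fieldTr n (x * y) := by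
  -- characteristic 2
  have h2 : (2 : F) = 0 := by
    have h := FiniteField.cast_card_eq_zero F
    rw [hcard] at h
    push_cast at h
    exact pow_eq_zero_iff (by omega) |>.mp h
  haveI : CharP F 2 := by
    have hdvd : ringChar F ∣ 2 := ringChar.dvd (by exact_mod_cast h2)
    have hne1 : ringChar F ≠ 1 := by
      intro h1
      have := (ringChar.spec F 1).mpr (by rw [h1])
      simp at this
    have : ringChar F = 2 := ((Nat.prime_two).eq_one_or_self_of_dvd _ hdvd).resolve_left hne1
    rw [← this]; exact ringChar.charP F
  intro x y hx hy
  -- theta squared identity on trace-zero elements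
  have hθ : ∀ a : F, fieldTr n a = 0 → (thetaMap k a) ^ 2 = thetaMap k a + a := by
    intro a ha
    have hsq : (thetaMap k a) ^ 2 = ∑ i ∈ Finset.range (k+1), a ^ (2 ^ (2*i+1)) := by
      unfold thetaMap
      have hm := map_sum (frobenius F 2) (fun i => a ^ (2^(2*i))) (Finset.range (k+1))
      simp only [frobenius_def] at hm
      rw [hm]
      refine Finset.sum_congr rfl fun i _ => ?_
      rw [← pow_mul, pow_succ]
    have hsum : (thetaMap k a) ^ 2 + thetaMap k a = a := by
      rw [hsq]
      unfold thetaMap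
      rw [add_comm, ← sum_even_odd (fun j => a ^ (2 ^ j)) (k+1)]
      have h1 : 2*(k+1) = n + 1 := by omega
      rw [h1, Finset.sum_range_succ]
      have h3 : ∑ j ∈ Finset.range n, a ^ (2^j) = fieldTr n a := rfl
      rw [h3, pow_card_self hcard, ha, zero_add]
    have hXX : thetaMap k a + thetaMap k a = 0 := CharTwo.add_self_eq_zero _
    calc thetaMap k a ^ 2 = (thetaMap k a ^ 2 + thetaMap k a) + thetaMap k a := by
          rw [add_assoc, hXX, add_zero]
      _ = thetaMap k a + a := by rw [hsum, add_comm]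
  set X := thetaMap k x with hXdef
  set Y := thetaMap k y with hYdef
  have hX := hθ x hx
  have hY := hθ y hy
  have key : X * Y ^ 2 + X ^ 2 * Y = X * y + x * Y := by
    rw [hX, hY]
    have h4 : X * (Y + y) + (X + x) * Y = (X * Y + X * Y) + (X * y + x * Y) := by ring
    rw [h4, CharTwo.add_self_eq_zero, zero_add]
  rw [key, tr_add]
  have e1 : fieldTr n (X * y) = ∑ i ∈ Finset.range (k+1), fieldTr n (x ^ (2^(2*i)) * y) := by
    rw [show X * y = ∑ i ∈ Finset.range (k+1), x ^ (2^(2*i)) * y from by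
      rw [← Finset.sum_mul]; rfl, tr_sum]
  have e2 : fieldTr n (x * Y) = ∑ i ∈ Finset.range (k+1), fieldTr n (x * y ^ (2^(2*i))) := by
    rw [show x * Y = ∑ i ∈ Finset.range (k+1), x * y ^ (2^(2*i)) from by
      rw [← Finset.mul_sum]; rfl, tr_sum]
  have e3 : ∀ i ∈ Finset.range (k+1),
      fieldTr n (x ^ (2^(2*i)) * y) = fieldTr n (x * y ^ (2^(2*(k-i)+1))) := by
    intro i hi
    rw [Finset.mem_range] at hi
    have hexp : (x * y ^ (2^(2*(k-i)+1))) ^ (2^(2*i)) = x ^ (2^(2*i)) * y := by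
      rw [mul_pow, ← pow_mul, ← pow_add]
      have h5 : 2*(k-i)+1 + 2*i = n := by omega
      rw [h5, pow_card_self hcard]
    rw [← hexp, tr_frob_pow hcard]
  have e4 : ∑ i ∈ Finset.range (k+1), fieldTr n (x * y ^ (2^(2*(k-i)+1)))
      = ∑ i ∈ Finset.range (k+1), fieldTr n (x * y ^ (2^(2*i+1))) := by
    have h6 := Finset.sum_range_reflect (fun i => fieldTr n (x * y ^ (2^(2*i+1)))) (k+1)
    simpa using h6
  rw [e1, e2, Finset.sum_congr rfl e3, e4, add_comm,
    ← sum_even_odd (fun j => fieldTr n (x * y ^ (2^j))) (k+1)]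
  have h7 : 2*(k+1) = n + 1 := by omega
  rw [h7, Finset.sum_range_succ]
  have h8 : ∑ j ∈ Finset.range n, fieldTr n (x * y ^ (2^j)) = 0 := by
    rw [← tr_sum, ← Finset.mul_sum]
    have h9 : ∑ j ∈ Finset.range n, y ^ (2^j) = fieldTr n y := rfl
    rw [h9, hy, mul_zero]
    simp [fieldTr]
  rw [h8, pow_card_self hcard, zero_add]
end
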